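/- There is an absolute constant C such that the following holds. Let K ≥ 1, let a : ℕ → ℂ satisfy the Rankin–Selberg bound with constant K, let U, R, N ≥ 1 be real numbers, and let λ : ℝ → ℂ be a measurable function with |λ(t)| ≤ 1 for all t. Then |∫_{−U}^{U} λ(t) · (∑_{R ≤ r < 2R} r^{−1/2−it}) · (∑_{N ≤ n < 2N} a(n) n^{−1/2+it}) dt| ≤ C·√K·√((R + U)(N + U)). -/

import Mathlib

/-! Cauchy–Schwarz in `t` reduces the estimate to the mean value bound
`∫_{-U}^{U} |∑_{M ≤ n < 2M} c(n) n^{it}|² dt ≪ (U + M) ∑ |c(n)|²` for each factor; the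
coefficient sums are `O(1)` and, by the Rankin–Selberg bound, `O(K)`.
For the mean value bound, majorise the indicator of `[-U, U]` by `e · exp(-(t/U)²)`. Expanding
the square turns the integral into a quadratic form in `c` whose kernel is the Fourier transform
of the Gaussian, `√π U exp(-(U (log m - log n) / 2)²)`. Since `|log m - log n| ≥ |m - n| / (2M)`
on the dyadic block, this kernel is `≪ min (U, M² / (U (m - n)²))`, so its row sums are
`O(U + M)`, and Schur's test bounds the form by that times `∑ |c(n)|²`. -/

open MeasureTheory Complex

/-- A sequence `a : ℕ → ℂ` satisfies the Rankin–Selberg bound with constant `K ≥ 1` if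
`∑_{n ≤ X} |a(n)|² ≤ K X` for every real `X ≥ 1`. -/
def RankinSelbergBound (a : ℕ → ℂ) (K : ℝ) : Prop :=
  ∀ X : ℝ, 1 ≤ X → ∑ n ∈ Finset.Icc 1 ⌊X⌋₊, ‖a n‖ ^ 2 ≤ K * X

open Finset ComplexConjugate

theorem exp_neg_sq_le_inv_sq {y : ℝ} (hy : y ≠ 0) : Real.exp (-y ^ 2) ≤ (y ^ 2)⁻¹ := by
  have hy2 : 0 < y ^ 2 := by positivity
  rw [Real.exp_neg]
  exact inv_anti₀ hy2 ((le_add_of_nonneg_right zero_le_one).trans (Real.add_one_le_exp _))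

theorem abs_sub_le_mul_abs_log_sub {x y B : ℝ} (hx : 0 < x) (hy : 0 < y) (hxB : x ≤ B)
    (hyB : y ≤ B) : |x - y| ≤ B * |Real.log x - Real.log y| := by
  wlog hxy : x ≤ y generalizing x y
  · rw [abs_sub_comm, abs_sub_comm (Real.log x)]
    exact this hy hx hyB hxB (le_of_not_ge hxy)
  have hlog : 1 - x / y ≤ Real.log y - Real.log x := by
    simpa [Real.log_div hy.ne' hx.ne'] using Real.one_sub_inv_le_log_of_pos (div_pos hy hx)
  rw [abs_of_nonpos (sub_nonpos.2 hxy),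
    abs_of_nonpos (sub_nonpos.2 (Real.log_le_log hx hxy))]
  calc -(x - y) = y * (1 - x / y) := by field_simp; ring
    _ ≤ y * (Real.log y - Real.log x) := mul_le_mul_of_nonneg_left hlog hy.le
    _ ≤ B * (Real.log y - Real.log x) :=
      mul_le_mul_of_nonneg_right hyB (sub_nonneg.2 (Real.log_le_log hx hxy))
    _ = B * (-(Real.log x - Real.log y)) := by ring

theorem sum_min_div_sq_le {T : Finset ℕ} (hT : ∀ k ∈ T, 0 < k) {U A : ℝ} (hU : 0 ≤ U)
    (hA : 0 ≤ A) (k₀ : ℕ) :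
    ∑ k ∈ T, min U (A / (k : ℝ) ^ 2) ≤ k₀ * U + 2 * A / (k₀ + 1) := by
  rw [← sum_filter_add_sum_filter_not T (· ≤ k₀)]
  gcongr
  · have hcard : #(T.filter (· ≤ k₀)) ≤ k₀ := by
      simpa using card_le_card (s := T.filter (· ≤ k₀)) (t := Icc 1 k₀) fun k hk => by
        simp only [mem_filter] at hk; simpa using ⟨hT k hk.1, hk.2⟩
    calc ∑ k ∈ T.filter (· ≤ k₀), min U (A / (k : ℝ) ^ 2)
        ≤ ∑ k ∈ T.filter (· ≤ k₀), U := sum_le_sum fun _ _ => min_le_left _ _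
      _ ≤ k₀ * U := by
        rw [sum_const, nsmul_eq_mul]; gcongr
  · calc ∑ k ∈ T.filter (¬· ≤ k₀), min U (A / (k : ℝ) ^ 2)
        ≤ ∑ k ∈ T.filter (¬· ≤ k₀), A * ((k : ℝ) ^ 2)⁻¹ :=
          sum_le_sum fun _ _ => (min_le_right _ _).trans_eq (div_eq_mul_inv _ _)
      _ ≤ ∑ k ∈ Ioo k₀ (T.sup id + 1), A * ((k : ℝ) ^ 2)⁻¹ := by
          refine sum_le_sum_of_subset_of_nonneg (fun k hk => ?_) (fun _ _ _ => by positivity)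
          simp only [mem_filter, not_le] at hk
          simpa [Nat.lt_succ_iff] using ⟨hk.2, le_sup (f := id) hk.1⟩
      _ ≤ A * (2 / (k₀ + 1)) := by rw [← mul_sum]; gcongr; exact sum_Ioo_inv_sq_le _ _
      _ = 2 * A / (k₀ + 1) := by ring

theorem sum_erase_min_div_sq_le (s : Finset ℕ) (m : ℕ) {U A : ℝ} (hU : 0 ≤ U) (hA : 0 ≤ A)
    (k₀ : ℕ) :
    ∑ n ∈ s.erase m, min U (A / ((n : ℝ) - m) ^ 2) ≤ 2 * (k₀ * U + 2 * A / (k₀ + 1)) := by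
  rw [← sum_filter_add_sum_filter_not _ (· < m), two_mul]
  gcongr
  · calc ∑ n ∈ (s.erase m).filter (· < m), min U (A / ((n : ℝ) - m) ^ 2)
        = ∑ k ∈ ((s.erase m).filter (· < m)).image (m - ·), min U (A / (k : ℝ) ^ 2) := by
          rw [sum_image fun a ha b hb h => by
            simp only [coe_filter, Set.mem_ofPred_eq] at ha hb; omega]
          refine sum_congr rfl fun n hn => ?_
          simp only [mem_filter] at hn
          rw [Nat.cast_sub hn.2.le, ← neg_sub, neg_sq]
      _ ≤ _ := sum_min_div_sq_le
          (by simp only [mem_image, mem_filter, mem_erase, forall_exists_index, and_imp]; omega)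
          hU hA k₀
  · calc ∑ n ∈ (s.erase m).filter (¬· < m), min U (A / ((n : ℝ) - m) ^ 2)
        = ∑ k ∈ ((s.erase m).filter (¬· < m)).image (· - m), min U (A / (k : ℝ) ^ 2) := by
          rw [sum_image fun a ha b hb h => by
            simp only [coe_filter, Set.mem_ofPred_eq] at ha hb; omega]
          refine sum_congr rfl fun n hn => ?_
          simp only [mem_filter, not_lt] at hn
          rw [Nat.cast_sub hn.2]
      _ ≤ _ := sum_min_div_sq_le
          (by
            simp only [not_lt, mem_image, mem_filter, mem_erase, forall_exists_index, and_imp]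
            omega)
          hU hA k₀

theorem integral_gaussian_mul_cexp {U : ℝ} (hU : 0 < U) (φ : ℝ) :
    ∫ t : ℝ, (Real.exp (-(t / U) ^ 2) : ℂ) * cexp (I * t * φ)
      = (√Real.pi * U * Real.exp (-(U * φ / 2) ^ 2) : ℝ) := by
  have hb : 0 < (((U : ℂ) ^ 2)⁻¹).re := by
    rw [← ofReal_pow, ← ofReal_inv, ofReal_re]; positivity
  have hsqrt : ((Real.pi : ℂ) / ((U : ℂ) ^ 2)⁻¹) ^ (1 / 2 : ℂ) = (√Real.pi * U : ℝ) := by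
    rw [show ((Real.pi : ℂ) / ((U : ℂ) ^ 2)⁻¹) = ((Real.pi * U ^ 2 : ℝ) : ℂ) by
        push_cast; field_simp,
      show (1 / 2 : ℂ) = ((1 / 2 : ℝ) : ℂ) by push_cast; rfl, ← ofReal_cpow (by positivity),
      ← Real.sqrt_eq_rpow, Real.sqrt_mul Real.pi_pos.le, Real.sqrt_sq hU.le]
  calc ∫ t : ℝ, (Real.exp (-(t / U) ^ 2) : ℂ) * cexp (I * t * φ)
      = ∫ t : ℝ, cexp (I * φ * t) * cexp (-((U : ℂ) ^ 2)⁻¹ * t ^ 2) := by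
        congr 1 with t
        rw [ofReal_exp, mul_comm]
        push_cast
        ring_nf
    _ = (√Real.pi * U * Real.exp (-(U * φ / 2) ^ 2) : ℝ) := by
        rw [fourierIntegral_gaussian hb, hsqrt]
        push_cast
        congr 2
        field_simp
        ring

theorem gaussian_le_min_div_sq {U δ φ d : ℝ} (hU : 0 < U) (hδ : 0 < δ) (hd : d ≠ 0)
    (hφ : δ * |d| ≤ |φ|) :
    U * Real.exp (-(U * φ / 2) ^ 2) ≤ min U (4 / (U * δ ^ 2) / d ^ 2) := by
  have hsq : δ ^ 2 * d ^ 2 ≤ φ ^ 2 := by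
    simpa only [mul_pow, sq_abs] using pow_le_pow_left₀ (by positivity) hφ 2
  have hφ0 : φ ≠ 0 := by rintro rfl; nlinarith [pow_pos hδ 2, pow_pos (abs_pos.2 hd) 2, sq_abs d]
  refine le_min (mul_le_of_le_one_right hU.le (Real.exp_le_one_iff.2 (by nlinarith))) ?_
  calc U * Real.exp (-(U * φ / 2) ^ 2)
      ≤ U * ((U * φ / 2) ^ 2)⁻¹ := by gcongr; exact exp_neg_sq_le_inv_sq (by positivity)
    _ = 4 / (U * φ ^ 2) := by field_simp; ring
    _ ≤ 4 / (U * δ ^ 2) / d ^ 2 := by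
      rw [div_div, mul_assoc]; gcongr

theorem sum_gaussian_le {s : Finset ℕ} {x : ℕ → ℝ} {δ U : ℝ} (hδ : 0 < δ) (hU : 0 < U)
    (hsep : ∀ m ∈ s, ∀ n ∈ s, δ * |(m : ℝ) - n| ≤ |x m - x n|) {m : ℕ} (hm : m ∈ s) :
    ∑ n ∈ s, U * Real.exp (-(U * (x m - x n) / 2) ^ 2) ≤ 3 * U + 18 / δ := by
  have hterm : ∀ n ∈ s.erase m, U * Real.exp (-(U * (x m - x n) / 2) ^ 2)
      ≤ min U (4 / (U * δ ^ 2) / ((n : ℝ) - m) ^ 2) := fun n hn => by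
    obtain ⟨hnm, hn⟩ := mem_erase.1 hn
    exact gaussian_le_min_div_sq hU hδ (sub_ne_zero.2 (Nat.cast_injective.ne hnm))
      (abs_sub_comm (m : ℝ) n ▸ hsep m hm n hn)
  -- the two bounds `U` and `4 / (U δ² k²)` on the `k`-th neighbour cross at `k ≈ 1 / (U δ)`
  set k₀ := ⌈(U * δ)⁻¹⌉₊
  have hk₀ : k₀ * U ≤ δ⁻¹ + U := by
    have := (Nat.ceil_lt_add_one (by positivity : 0 ≤ (U * δ)⁻¹)).le
    calc k₀ * U ≤ ((U * δ)⁻¹ + 1) * U := by gcongr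
      _ = δ⁻¹ + U := by field_simp
  have hk₀' : 2 * (4 / (U * δ ^ 2)) / (k₀ + 1) ≤ 8 / δ := by
    have : (U * δ)⁻¹ ≤ k₀ + 1 := (Nat.le_ceil _).trans (le_add_of_nonneg_right zero_le_one)
    calc 2 * (4 / (U * δ ^ 2)) / (k₀ + 1) ≤ 2 * (4 / (U * δ ^ 2)) / (U * δ)⁻¹ := by gcongr
      _ = 8 / δ := by field_simp; ring
  rw [← add_sum_erase s _ hm, sub_self, mul_zero, zero_div, zero_pow two_ne_zero, neg_zero,
    Real.exp_zero, mul_one]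
  calc U + ∑ n ∈ s.erase m, U * Real.exp (-(U * (x m - x n) / 2) ^ 2)
      ≤ U + 2 * (k₀ * U + 2 * (4 / (U * δ ^ 2)) / (k₀ + 1)) := by
        gcongr
        exact (sum_le_sum hterm).trans (sum_erase_min_div_sq_le s m hU.le (by positivity) k₀)
    _ ≤ U + 2 * (δ⁻¹ + U + 8 / δ) := by gcongr
    _ = 3 * U + 18 / δ := by ring

theorem setIntegral_Icc_le_exp_one_mul_integral_gaussian_mul {U : ℝ} (hU : 0 < U) {f : ℝ → ℝ}
    (hf : 0 ≤ f) (hwf : Integrable (fun t => Real.exp (-(t / U) ^ 2) * f t)) :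
    ∫ t in Set.Icc (-U) U, f t ≤ Real.exp 1 * ∫ t, Real.exp (-(t / U) ^ 2) * f t := by
  have hmajor : ∀ t ∈ Set.Icc (-U) U, 1 ≤ Real.exp 1 * Real.exp (-(t / U) ^ 2) := by
    intro t ht
    have : (t / U) ^ 2 ≤ 1 := by
      rw [div_pow, div_le_one (by positivity)]; nlinarith [ht.1, ht.2]
    rw [← Real.exp_add, Real.one_le_exp_iff]
    linarith
  rw [← integral_const_mul]
  calc ∫ t in Set.Icc (-U) U, f t
      ≤ ∫ t in Set.Icc (-U) U, Real.exp 1 * (Real.exp (-(t / U) ^ 2) * f t) := by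
        refine integral_mono_of_nonneg (.of_forall fun t => hf t)
          (hwf.const_mul _).integrableOn ?_
        filter_upwards [ae_restrict_mem measurableSet_Icc] with t ht
        simpa only [← mul_assoc] using le_mul_of_one_le_left (hf t) (hmajor t ht)
    _ ≤ ∫ t, Real.exp 1 * (Real.exp (-(t / U) ^ 2) * f t) :=
        setIntegral_le_integral (hwf.const_mul _)
          (.of_forall fun t => mul_nonneg (by positivity) (mul_nonneg (by positivity) (hf t)))

theorem norm_sum_sum_mul_conj_le {ι : Type*} (s : Finset ι) (c : ι → ℂ) (k : ι → ι → ℂ)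
    (hk : ∀ m n, ‖k m n‖ = ‖k n m‖) {B : ℝ} (hB : ∀ m ∈ s, ∑ n ∈ s, ‖k m n‖ ≤ B) :
    ‖∑ m ∈ s, ∑ n ∈ s, c m * conj (c n) * k m n‖ ≤ B * ∑ n ∈ s, ‖c n‖ ^ 2 := by
  have hswap : ∑ m ∈ s, ∑ n ∈ s, ‖c n‖ ^ 2 * ‖k m n‖ = ∑ m ∈ s, ∑ n ∈ s, ‖c m‖ ^ 2 * ‖k m n‖ := by
    rw [sum_comm]; simp only [hk]
  calc ‖∑ m ∈ s, ∑ n ∈ s, c m * conj (c n) * k m n‖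
      ≤ ∑ m ∈ s, ∑ n ∈ s, ‖c m‖ * ‖c n‖ * ‖k m n‖ := by
        refine (norm_sum_le _ _).trans (sum_le_sum fun m _ => (norm_sum_le _ _).trans_eq ?_)
        simp only [norm_mul, RCLike.norm_conj]
    _ ≤ ∑ m ∈ s, ∑ n ∈ s, (‖c m‖ ^ 2 + ‖c n‖ ^ 2) / 2 * ‖k m n‖ := by
        gcongr with m _ n _
        nlinarith [sq_nonneg (‖c m‖ - ‖c n‖)]
    _ = ∑ m ∈ s, ‖c m‖ ^ 2 * ∑ n ∈ s, ‖k m n‖ := by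
        simp only [add_div, add_mul, sum_add_distrib, div_mul_eq_mul_div, ← sum_div, hswap,
          mul_sum]
        ring
    _ ≤ ∑ m ∈ s, ‖c m‖ ^ 2 * B := by gcongr with m hm; exact hB m hm
    _ = B * ∑ n ∈ s, ‖c n‖ ^ 2 := by rw [← sum_mul, mul_comm]

theorem norm_cexp_I_mul_mul (t φ : ℝ) : ‖cexp (I * t * φ)‖ = 1 := by
  rw [mul_assoc, ← ofReal_mul, norm_exp_I_mul_ofReal]

theorem norm_sum_cexp_le {ι : Type*} (s : Finset ι) (c : ι → ℂ) (x : ι → ℝ) (t : ℝ) :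
    ‖∑ n ∈ s, c n * cexp (I * t * x n)‖ ≤ ∑ n ∈ s, ‖c n‖ :=
  (norm_sum_le _ _).trans_eq
    (sum_congr rfl fun n _ => by rw [norm_mul, norm_cexp_I_mul_mul, mul_one])

theorem norm_sq_sum_cexp_eq {ι : Type*} (s : Finset ι) (c : ι → ℂ) (x : ι → ℝ) (t : ℝ) :
    (‖∑ n ∈ s, c n * cexp (I * t * x n)‖ ^ 2 : ℂ)
      = ∑ m ∈ s, ∑ n ∈ s, c m * conj (c n) * cexp (I * t * (x m - x n : ℝ)) := by
  rw [← mul_conj', map_sum, sum_mul_sum]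
  refine sum_congr rfl fun m _ => sum_congr rfl fun n _ => ?_
  rw [map_mul, ← exp_conj, ofReal_sub, mul_sub, Complex.exp_sub]
  simp only [map_mul, conj_I, conj_ofReal, neg_mul, Complex.exp_neg]
  ring

theorem integral_mul_norm_sq_sum_cexp {ι : Type*} {μ : Measure ℝ} {w : ℝ → ℝ}
    (hw : Integrable w μ) (s : Finset ι) (c : ι → ℂ) (x : ι → ℝ) :
    ((∫ t, w t * ‖∑ n ∈ s, c n * cexp (I * t * x n)‖ ^ 2 ∂μ : ℝ) : ℂ)
      = ∑ m ∈ s, ∑ n ∈ s,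
          c m * conj (c n) * ∫ t, (w t : ℂ) * cexp (I * t * (x m - x n : ℝ)) ∂μ := by
  have hint : ∀ φ : ℝ, Integrable (fun t => (w t : ℂ) * cexp (I * t * φ)) μ := fun φ =>
    hw.ofReal.mul_bdd (by fun_prop) (.of_forall fun t => (norm_cexp_I_mul_mul t φ).le)
  have hterm : ∀ m n, Integrable
      (fun t => (w t : ℂ) * (c m * conj (c n) * cexp (I * t * (x m - x n : ℝ)))) μ := fun m n =>
    ((hint _).const_mul (c m * conj (c n))).congr (.of_forall fun t => by ring)
  rw [← integral_complex_ofReal]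
  simp only [ofReal_mul, ofReal_pow, norm_sq_sum_cexp_eq, mul_sum]
  rw [integral_finsetSum _ fun m _ => integrable_finsetSum _ fun n _ => hterm m n]
  refine sum_congr rfl fun m _ => ?_
  rw [integral_finsetSum _ fun n _ => hterm m n]
  refine sum_congr rfl fun n _ => ?_
  rw [← integral_const_mul]
  congr 1 with t
  ring

theorem integral_norm_sq_sum_cexp_le {s : Finset ℕ} {x : ℕ → ℝ} {δ U : ℝ} (hδ : 0 < δ)
    (hU : 0 < U) (hsep : ∀ m ∈ s, ∀ n ∈ s, δ * |(m : ℝ) - n| ≤ |x m - x n|) (c : ℕ → ℂ) :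
    ∫ t in Set.Icc (-U) U, ‖∑ n ∈ s, c n * cexp (I * t * x n)‖ ^ 2
      ≤ Real.exp 1 * √Real.pi * (3 * U + 18 / δ) * ∑ n ∈ s, ‖c n‖ ^ 2 := by
  have hw : Integrable fun t : ℝ => Real.exp (-(t / U) ^ 2) := by
    refine (integrable_exp_neg_mul_sq (b := (U ^ 2)⁻¹) (by positivity)).congr
      (.of_forall fun t => ?_)
    simp only [div_pow, neg_mul, inv_mul_eq_div]
  have hwS : Integrable fun t : ℝ =>
      Real.exp (-(t / U) ^ 2) * ‖∑ n ∈ s, c n * cexp (I * t * x n)‖ ^ 2 :=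
    hw.mul_bdd (by fun_prop) (c := (∑ n ∈ s, ‖c n‖) ^ 2) (.of_forall fun t => by
      rw [norm_pow, norm_norm]; gcongr; exact norm_sum_cexp_le s c x t)
  have hrow : ∀ m ∈ s, ∑ n ∈ s, ‖((√Real.pi * U * Real.exp (-(U * (x m - x n) / 2) ^ 2) : ℝ) : ℂ)‖
      ≤ √Real.pi * (3 * U + 18 / δ) := fun m hm => by
    calc ∑ n ∈ s, ‖((√Real.pi * U * Real.exp (-(U * (x m - x n) / 2) ^ 2) : ℝ) : ℂ)‖
        = √Real.pi * ∑ n ∈ s, U * Real.exp (-(U * (x m - x n) / 2) ^ 2) := by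
          rw [mul_sum]
          exact sum_congr rfl fun n _ => by rw [Complex.norm_of_nonneg (by positivity), mul_assoc]
      _ ≤ √Real.pi * (3 * U + 18 / δ) := by gcongr; exact sum_gaussian_le hδ hU hsep hm
  calc ∫ t in Set.Icc (-U) U, ‖∑ n ∈ s, c n * cexp (I * t * x n)‖ ^ 2
      ≤ Real.exp 1 * ∫ t, Real.exp (-(t / U) ^ 2) * ‖∑ n ∈ s, c n * cexp (I * t * x n)‖ ^ 2 :=
        setIntegral_Icc_le_exp_one_mul_integral_gaussian_mul hU (fun t => by positivity) hwS
    _ = Real.exp 1 * ‖∑ m ∈ s, ∑ n ∈ s, c m * conj (c n) *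
          ((√Real.pi * U * Real.exp (-(U * (x m - x n) / 2) ^ 2) : ℝ) : ℂ)‖ := by
        rw [← Complex.norm_of_nonneg (integral_nonneg fun t => by positivity),
          integral_mul_norm_sq_sum_cexp hw]
        simp only [integral_gaussian_mul_cexp hU]
    _ ≤ Real.exp 1 * (√Real.pi * (3 * U + 18 / δ) * ∑ n ∈ s, ‖c n‖ ^ 2) := by
        gcongr
        exact norm_sum_sum_mul_conj_le s c _
          (fun m n => by rw [← neg_sub, mul_neg, neg_div, neg_sq]) hrow
    _ = _ := by ring

theorem norm_integral_mul_mul_le_sqrt {α : Type*} [MeasurableSpace α] {μ : Measure α}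
    {lam f g : α → ℂ} (hlam : ∀ᵐ t ∂μ, ‖lam t‖ ≤ 1) (hf : MemLp f 2 μ) (hg : MemLp g 2 μ) :
    ‖∫ t, lam t * f t * g t ∂μ‖ ≤ √(∫ t, ‖f t‖ ^ 2 ∂μ) * √(∫ t, ‖g t‖ ^ 2 ∂μ) := by
  have holder := integral_mul_norm_le_Lp_mul_Lq (μ := μ) Real.HolderConjugate.two_two
    (by simpa using hf) (by simpa using hg)
  simp only [Real.rpow_two, ← Real.sqrt_eq_rpow] at holder
  refine (norm_integral_le_of_norm_le (hf.norm.integrable_mul hg.norm) ?_).trans holder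
  filter_upwards [hlam] with t ht
  rw [norm_mul, norm_mul]
  exact mul_le_mul_of_nonneg_right (mul_le_of_le_one_left (norm_nonneg _) ht) (norm_nonneg _)

theorem Continuous.memLp_two_restrict_Icc {f : ℝ → ℂ} (hf : Continuous f) (a b : ℝ) :
    MemLp f 2 (volume.restrict (Set.Icc a b)) :=
  (memLp_two_iff_integrable_sq_norm hf.aestronglyMeasurable).2 (hf.norm.pow 2).integrableOn_Icc

theorem mem_Ico_ceil_iff {a b : ℝ} {n : ℕ} : n ∈ Ico ⌈a⌉₊ ⌈b⌉₊ ↔ a ≤ n ∧ (n : ℝ) < b := by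
  simp [Nat.ceil_le, Nat.lt_ceil]

theorem log_separated_Ico_ceil {M : ℝ} (hM : 0 < M) :
    ∀ m ∈ Ico ⌈M⌉₊ ⌈2 * M⌉₊, ∀ n ∈ Ico ⌈M⌉₊ ⌈2 * M⌉₊,
      (2 * M)⁻¹ * |(m : ℝ) - n| ≤ |Real.log m - Real.log n| := by
  intro m hm n hn
  rw [mem_Ico_ceil_iff] at hm hn
  rw [inv_mul_le_iff₀ (by positivity)]
  exact abs_sub_le_mul_abs_log_sub (by linarith) (by linarith) hm.2.le hn.2.le

theorem norm_rpow_neg_half_sq (n : ℕ) : ‖(((n : ℝ) ^ (-(1 / 2) : ℝ) : ℝ) : ℂ)‖ ^ 2 = (n : ℝ)⁻¹ := by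
  rw [Complex.norm_of_nonneg (by positivity), ← Real.rpow_mul_natCast (Nat.cast_nonneg n)]
  norm_num [Real.rpow_neg_one]

theorem card_Ico_ceil_le {M : ℝ} (hM : 0 ≤ M) : (#(Ico ⌈M⌉₊ ⌈2 * M⌉₊) : ℝ) ≤ M + 1 := by
  rw [Nat.card_Ico, Nat.cast_sub (Nat.ceil_mono (by linarith))]
  linarith [Nat.ceil_lt_add_one (by linarith : 0 ≤ 2 * M), Nat.le_ceil M]

theorem sum_Ico_ceil_norm_rpow_sq_le {M : ℝ} (hM : 1 ≤ M) :
    ∑ n ∈ Ico ⌈M⌉₊ ⌈2 * M⌉₊, ‖(((n : ℝ) ^ (-(1 / 2) : ℝ) : ℝ) : ℂ)‖ ^ 2 ≤ 2 := by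
  have hM0 : 0 < M := by linarith
  calc ∑ n ∈ Ico ⌈M⌉₊ ⌈2 * M⌉₊, ‖(((n : ℝ) ^ (-(1 / 2) : ℝ) : ℝ) : ℂ)‖ ^ 2
      ≤ ∑ n ∈ Ico ⌈M⌉₊ ⌈2 * M⌉₊, M⁻¹ := sum_le_sum fun n hn => by
        rw [norm_rpow_neg_half_sq]; exact inv_anti₀ hM0 (mem_Ico_ceil_iff.1 hn).1
    _ ≤ (M + 1) * M⁻¹ := by
        rw [sum_const, nsmul_eq_mul]; gcongr; exact card_Ico_ceil_le hM0.le
    _ ≤ 2 := by rw [add_mul, mul_inv_cancel₀ hM0.ne']; linarith [inv_le_one_of_one_le₀ hM]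

theorem RankinSelbergBound.sum_Ico_ceil_norm_mul_rpow_sq_le {a : ℕ → ℂ} {K : ℝ}
    (ha : RankinSelbergBound a K) {N : ℝ} (hN : 1 ≤ N) :
    ∑ n ∈ Ico ⌈N⌉₊ ⌈2 * N⌉₊, ‖a n * (((n : ℝ) ^ (-(1 / 2) : ℝ) : ℝ) : ℂ)‖ ^ 2 ≤ 2 * K := by
  have hN0 : 0 < N := by linarith
  have hsub : Ico ⌈N⌉₊ ⌈2 * N⌉₊ ⊆ Icc 1 ⌊2 * N⌋₊ := fun n hn => by
    rw [mem_Ico_ceil_iff] at hn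
    rw [mem_Icc, Nat.one_le_iff_ne_zero, Nat.le_floor_iff (by linarith)]
    exact ⟨by rintro rfl; simp only [Nat.cast_zero] at hn; linarith, hn.2.le⟩
  calc ∑ n ∈ Ico ⌈N⌉₊ ⌈2 * N⌉₊, ‖a n * (((n : ℝ) ^ (-(1 / 2) : ℝ) : ℝ) : ℂ)‖ ^ 2
      ≤ ∑ n ∈ Ico ⌈N⌉₊ ⌈2 * N⌉₊, ‖a n‖ ^ 2 * N⁻¹ := sum_le_sum fun n hn => by
        rw [norm_mul, mul_pow, norm_rpow_neg_half_sq]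
        gcongr
        exact (mem_Ico_ceil_iff.1 hn).1
    _ ≤ (∑ n ∈ Icc 1 ⌊2 * N⌋₊, ‖a n‖ ^ 2) * N⁻¹ := by
        rw [← sum_mul]
        exact mul_le_mul_of_nonneg_right
          (sum_le_sum_of_subset_of_nonneg hsub fun _ _ _ => by positivity) (by positivity)
    _ ≤ K * (2 * N) * N⁻¹ := by gcongr; exact ha _ (by linarith)
    _ = 2 * K := by field_simp

/-- Bilinear estimate via Cauchy–Schwarz and Gallagher's large sieve:
`|∫_{-U}^{U} λ(t) (∑_{R ≤ r < 2R} r^{-1/2-it}) (∑_{N ≤ n < 2N} a(n) n^{-1/2+it}) dt|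
  ≤ C √K √((R+U)(N+U))`. -/
theorem bilinear_large_sieve :
    ∃ C : ℝ, 0 < C ∧ ∀ (K : ℝ), 1 ≤ K → ∀ a : ℕ → ℂ, RankinSelbergBound a K →
      ∀ (U R N : ℝ), 1 ≤ U → 1 ≤ R → 1 ≤ N →
      ∀ lam : ℝ → ℂ, Measurable lam → (∀ t : ℝ, ‖lam t‖ ≤ 1) →
      ‖∫ t in Set.Icc (-U) U,
          lam t *
          (∑ r ∈ Finset.Ico ⌈R⌉₊ ⌈2 * R⌉₊,
              (((r : ℝ) ^ (-(1/2) : ℝ) : ℝ) : ℂ) *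
                Complex.exp (-(Complex.I * (t : ℂ) * (Real.log r : ℂ)))) *
          (∑ n ∈ Finset.Ico ⌈N⌉₊ ⌈2 * N⌉₊,
              a n * (((n : ℝ) ^ (-(1/2) : ℝ) : ℝ) : ℂ) *
                Complex.exp (Complex.I * (t : ℂ) * (Real.log n : ℂ)))‖
        ≤ C * Real.sqrt K * Real.sqrt ((R + U) * (N + U)) := by
  set C := 72 * (Real.exp 1 * √Real.pi) with hC_def
  refine ⟨C, by positivity, fun K hK a ha U R N hU hR hN lam _ hlam => ?_⟩
  have hC : 0 < Real.exp 1 * √Real.pi := by positivity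
  have hmeanR := integral_norm_sq_sum_cexp_le (s := Ico ⌈R⌉₊ ⌈2 * R⌉₊) (x := fun r => -Real.log r)
    (δ := (2 * R)⁻¹) (U := U) (inv_pos.2 (by positivity))
    (by positivity) (fun m hm n hn => by
      simpa only [neg_sub_neg, abs_sub_comm] using log_separated_Ico_ceil (by positivity) m hm n hn)
    fun r => (((r : ℝ) ^ (-(1/2) : ℝ) : ℝ) : ℂ)
  have hmeanN := integral_norm_sq_sum_cexp_le (s := Ico ⌈N⌉₊ ⌈2 * N⌉₊) (x := fun n => Real.log n)
    (δ := (2 * N)⁻¹) (U := U) (inv_pos.2 (by positivity))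
    (by positivity) (log_separated_Ico_ceil (by positivity))
    fun n => a n * (((n : ℝ) ^ (-(1/2) : ℝ) : ℝ) : ℂ)
  simp only [ofReal_neg, mul_neg, div_inv_eq_mul] at hmeanR hmeanN
  have hboundR := hmeanR.trans
    (mul_le_mul_of_nonneg_left (sum_Ico_ceil_norm_rpow_sq_le hR) (by positivity))
  have hboundN := hmeanN.trans
    (mul_le_mul_of_nonneg_left (ha.sum_Ico_ceil_norm_mul_rpow_sq_le hN) (by positivity))
  calc _ ≤ _ := norm_integral_mul_mul_le_sqrt (.of_forall hlam)
        ((continuous_finsetSum _ fun r _ => by fun_prop).memLp_two_restrict_Icc _ _)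
        ((continuous_finsetSum _ fun n _ => by fun_prop).memLp_two_restrict_Icc _ _)
    _ ≤ √(C * (R + U)) * √(C * (K * (N + U))) := by
        gcongr
        · exact hboundR.trans (by nlinarith)
        · exact hboundN.trans (by nlinarith [mul_nonneg hC.le (by linarith : (0 : ℝ) ≤ K)])
    _ = C * √K * √((R + U) * (N + U)) := by
        rw [← Real.sqrt_mul (by positivity), mul_mul_mul_comm, Real.sqrt_mul (by positivity),
          Real.sqrt_mul_self (by positivity), mul_left_comm, Real.sqrt_mul (by positivity),
          hC_def]
        ring
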